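/- arXiv:1301.3791 — 9 statements merged into one kernel-verified Lean document; each statement's English description precedes it below -/
import Mathlib

section
/- An MDS code with parameters (k, n-k) cannot have block locality smaller than k; that is, if every coded block is a function of at most r other coded blocks and any k of the n coded blocks determine the file, then r ≥ k. -/
/-!
Pick a block `i` and a repair set `R` for it, `|R| ≤ r`. If `r < k`, enlarge `R` to a set `A`
of `k - 1` blocks avoiding `i`. By submodularity, adding `i` to `A` gains no more entropy than
adding it to `R`, namely none, so `H (A ∪ {i}) ≤ H A ≤ (k - 1) M / k < M`, although `A ∪ {i}`
consists of `k` blocks and must carry the whole file.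
-/

open Finset

def IsSubmodular {α : Type*} [DecidableEq α] (H : Finset α → ℝ) : Prop :=
  ∀ S T : Finset α, H (S ∪ T) + H (S ∩ T) ≤ H S + H T

namespace IsSubmodular

variable {α : Type*} [DecidableEq α] {H : Finset α → ℝ}

theorem union_le_of_disjoint (hH : IsSubmodular H) (hH0 : H ∅ = 0) {S T : Finset α}
    (hST : Disjoint S T) : H (S ∪ T) ≤ H S + H T := by
  have := hH S T
  rwa [disjoint_iff_inter_eq_empty.mp hST, hH0, add_zero] at this

theorem le_card_mul (hH : IsSubmodular H) (hH0 : H ∅ = 0) {c : ℝ} (hc : ∀ a, H {a} ≤ c)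
    (S : Finset α) : H S ≤ #S * c := by
  induction S using Finset.induction_on with
  | empty => simp [hH0]
  | @insert a S ha ih =>
    have hunion := hH.union_le_of_disjoint hH0 (disjoint_singleton_left.mpr ha)
    rw [← insert_eq] at hunion
    rw [card_insert_of_notMem ha, Nat.cast_succ, add_one_mul]
    linarith [hc a]

theorem insert_le_of_insert_eq (hH : IsSubmodular H) {i : α} {R A : Finset α}
    (hR : H (insert i R) = H R) (hRA : R ⊆ A) : H (insert i A) ≤ H A := by
  by_cases hiA : i ∈ A
  · rw [insert_eq_of_mem hiA]
  have hunion : A ∪ insert i R = insert i A := by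
    rw [union_insert, union_eq_left.mpr hRA]
  have hinter : A ∩ insert i R = R := by
    rw [inter_insert_of_notMem hiA, inter_eq_right.mpr hRA]
  have := hH A (insert i R)
  rw [hunion, hinter, hR] at this
  linarith

end IsSubmodular

theorem Finset.exists_superset_card_eq_notMem {α : Type*} [Fintype α] [DecidableEq α]
    {i : α} {R : Finset α} {m : ℕ} (hiR : i ∉ R) (hRm : #R ≤ m)
    (hm : m + 1 ≤ Fintype.card α) : ∃ A : Finset α, R ⊆ A ∧ i ∉ A ∧ #A = m := by
  have hRsub : R ⊆ univ.erase i := fun x hx =>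
    mem_erase.mpr ⟨fun hxi => hiR (hxi ▸ hx), mem_univ x⟩
  obtain ⟨A, hRA, hAsub, hA⟩ := exists_subsuperset_card_eq hRsub hRm (by
    rw [card_erase_of_mem (mem_univ i), card_univ]; omega)
  exact ⟨A, hRA, fun hiA => (mem_erase.mp (hAsub hiA)).1 rfl, hA⟩

theorem stmt_0_general (n k r : ℕ) (M : ℝ) (hM : 0 < M) (hk : 0 < k) (hkn : k ≤ n)
    (H : Finset (Fin n) → ℝ)
    (hH0 : H ∅ = 0)
    (hsub : ∀ S T : Finset (Fin n), H (S ∪ T) + H (S ∩ T) ≤ H S + H T)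
    (hsingle : ∀ i : Fin n, H {i} = M / k)
    (hMDS : ∀ S : Finset (Fin n), S.card = k → M ≤ H S)
    (hloc : ∀ i : Fin n, ∃ R : Finset (Fin n),
      i ∉ R ∧ R.card ≤ r ∧ H (insert i R) = H R) :
    k ≤ r := by
  by_contra! hr
  let i : Fin n := ⟨0, by omega⟩
  obtain ⟨R, hiR, hRr, hHR⟩ := hloc i
  obtain ⟨A, hRA, hiA, hA⟩ := exists_superset_card_eq_notMem (m := k - 1) hiR (by omega)
    (by rw [Fintype.card_fin]; omega)
  have hdeficit : ((k - 1 : ℕ) : ℝ) * (M / k) < M := by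
    rw [Nat.cast_pred hk, sub_mul, one_mul, mul_div_cancel₀ _ (by positivity)]
    linarith [div_pos hM (Nat.cast_pos.mpr hk)]
  refine lt_irrefl M ?_
  calc M ≤ H (insert i A) := hMDS _ (by rw [card_insert_of_notMem hiA, hA]; omega)
    _ ≤ H A := IsSubmodular.insert_le_of_insert_eq hsub hHR hRA
    _ ≤ #A * (M / k) := IsSubmodular.le_card_mul hsub hH0 (fun j => (hsingle j).le) A
    _ = ((k - 1 : ℕ) : ℝ) * (M / k) := by rw [hA]
    _ < M := hdeficit

/-- An MDS code with parameters (k, n-k) cannot have block locality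
smaller than k.  Blocks are modelled as an entropy function `H` on subsets of the
`n` coded blocks, each block having entropy `M/k`; MDS means any `k` blocks have
entropy (at least) `M`; locality `r` means every block is a function of at most
`r` other blocks. -/
theorem stmt_0 (n k r : ℕ) (M : ℝ) (hM : 0 < M) (hk : 0 < k) (hkn : k ≤ n)
    (H : Finset (Fin n) → ℝ)
    (hH0 : H ∅ = 0)
    (hmono : ∀ S T : Finset (Fin n), S ⊆ T → H S ≤ H T)
    (hsub : ∀ S T : Finset (Fin n), H (S ∪ T) + H (S ∩ T) ≤ H S + H T)
    (hsingle : ∀ i : Fin n, H {i} = M / k)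
    (hMDS : ∀ S : Finset (Fin n), S.card = k → M ≤ H S)
    (hloc : ∀ i : Fin n, ∃ R : Finset (Fin n),
      i ∉ R ∧ R.card ≤ r ∧ H (insert i R) = H R) :
    k ≤ r :=
  stmt_0_general n k r M hM hk hkn H hH0 hsub hsingle hMDS hloc
end

section
/- For any code of length n in which each coded block has entropy M/k and has locality r, the minimum distance satisfies d ≤ n - ⌈k/r⌉ - k + 2. -/
/-!
Treat `H` as an entropy function: monotone, submodular and zero on `∅`, with singletons of
entropy `M / k`. Greedily pick a block outside the current set together with its repair group; by
submodularity the block adds no entropy once its repair group is present, so each round enlarges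
the set by at most `r + 1` blocks and saves `M / k` of entropy. If the bound failed, then
`s = n - d + 1` blocks would leave room for `s - k + 1` rounds, and padding would yield `s` blocks
of entropy at most `(k - 1) M / k < M`.
-/

open Finset

section SetFunction

variable {α : Type*} [DecidableEq α] {H : Finset α → ℝ}

theorem apply_union_le_add_card_mul (hH0 : H ∅ = 0) (hmono : Monotone H)
    (hsub : IsSubmodular H) {q : ℝ} (hq : ∀ i, H {i} ≤ q) (S T : Finset α) :
    H (S ∪ T) ≤ H S + #T * q := by
  induction T using Finset.induction_on with
  | empty => simp
  | insert a T ha ih =>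
    have hinter : 0 ≤ H ((S ∪ T) ∩ {a}) := hH0 ▸ hmono (empty_subset _)
    have hstep := hsub (S ∪ T) {a}
    rw [union_insert, insert_eq, union_comm, card_insert_of_notMem ha]
    push_cast
    linarith [hq a]

theorem apply_insert_eq_of_subset (hmono : Monotone H) (hsub : IsSubmodular H)
    {i : α} {R A : Finset α} (hRA : R ⊆ A) (hR : H (insert i R) = H R) :
    H (insert i A) = H A := by
  have hunion : insert i R ∪ A = insert i A := by
    rw [insert_union, union_eq_right.mpr hRA]
  have hinter : H R ≤ H (insert i R ∩ A) :=
    hmono (subset_inter (subset_insert i R) hRA)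
  have hstep := hsub (insert i R) A
  rw [hunion] at hstep
  linarith [hmono (subset_insert i A)]

variable [Fintype α] {q : ℝ} {r : ℕ}

theorem exists_card_le_apply_le_of_locality (hH0 : H ∅ = 0) (hmono : Monotone H)
    (hsub : IsSubmodular H) (hq : ∀ i, H {i} ≤ q)
    (hloc : ∀ i, ∃ R : Finset α, i ∉ R ∧ #R ≤ r ∧ H (insert i R) = H R)
    {j : ℕ} (hj : j * (r + 1) ≤ Fintype.card α) :
    ∃ S : Finset α, #S ≤ j * (r + 1) ∧ H S ≤ (#S - j) * q := by
  induction j with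
  | zero => exact ⟨∅, by simp, by simp [hH0]⟩
  | succ j ih =>
    obtain ⟨S, hScard, hSH⟩ := ih (le_trans (by gcongr; omega) hj)
    obtain ⟨i, hiS⟩ : ∃ i, i ∉ S := by
      by_contra! h
      have := card_le_card (fun x _ => h x : (univ : Finset α) ⊆ S)
      rw [card_univ] at this
      nlinarith
    obtain ⟨R, hiR, hRcard, hRH⟩ := hloc i
    have hunion : S ∪ R = S ∪ (R \ S) := union_sdiff_self_eq_union.symm
    have hiA : i ∉ S ∪ R := by simp [hiS, hiR]
    have hcard : #(insert i (S ∪ R)) = #S + #(R \ S) + 1 := by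
      rw [card_insert_of_notMem hiA, hunion, card_union_of_disjoint disjoint_sdiff]
    have hRS : #(R \ S) ≤ r := (card_le_card sdiff_subset).trans hRcard
    refine ⟨insert i (S ∪ R), by rw [hcard]; nlinarith, ?_⟩
    have hgrow : H (S ∪ R) ≤ H S + #(R \ S) * q :=
      hunion ▸ apply_union_le_add_card_mul hH0 hmono hsub hq S _
    rw [apply_insert_eq_of_subset hmono hsub subset_union_right hRH, hcard]
    push_cast
    linarith

theorem exists_card_eq_apply_le_of_locality (hH0 : H ∅ = 0) (hmono : Monotone H)
    (hsub : IsSubmodular H) (hq : ∀ i, H {i} ≤ q)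
    (hloc : ∀ i, ∃ R : Finset α, i ∉ R ∧ #R ≤ r ∧ H (insert i R) = H R)
    {j s : ℕ} (hjs : j * (r + 1) ≤ s) (hs : s ≤ Fintype.card α) :
    ∃ T : Finset α, #T = s ∧ H T ≤ (s - j) * q := by
  obtain ⟨S, hScard, hSH⟩ :=
    exists_card_le_apply_le_of_locality hH0 hmono hsub hq hloc (hjs.trans hs)
  obtain ⟨T, hST, hTcard⟩ := exists_superset_card_eq (hScard.trans hjs) (by simpa using hs)
  refine ⟨T, hTcard, ?_⟩
  have hpad : H T ≤ H S + #(T \ S) * q := by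
    simpa [union_sdiff_of_subset hST] using apply_union_le_add_card_mul hH0 hmono hsub hq S (T \ S)
  rw [card_sdiff_of_subset hST, hTcard, Nat.cast_sub (hScard.trans hjs)] at hpad
  linarith

end SetFunction

theorem sub_add_one_mul_succ_le {k r s : ℕ} (hk : 0 < k)
    (hs : (s : ℤ) ≤ ⌈(k : ℚ) / r⌉ + k - 2) : (s + 1 - k) * (r + 1) ≤ s := by
  have hceil : (⌈(k : ℚ) / r⌉ - 1) * (r : ℤ) < k := by
    rcases r.eq_zero_or_pos with rfl | hr
    · simpa using hk
    · have h := Int.ceil_lt_add_one ((k : ℚ) / r)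
      rw [← sub_lt_iff_lt_add, lt_div_iff₀ (by exact_mod_cast hr)] at h
      exact_mod_cast h
  rcases Nat.eq_zero_or_pos (s + 1 - k) with h0 | hpos
  · simp [h0]
  · have hjz : ((s + 1 - k : ℕ) : ℤ) = s + 1 - k := by omega
    have hjr : ((s + 1 - k : ℕ) : ℤ) * r < k :=
      (mul_le_mul_of_nonneg_right (by omega) (Int.natCast_nonneg r)).trans_lt hceil
    suffices ((s + 1 - k : ℕ) : ℤ) * r + (s + 1 - k : ℕ) ≤ s by
      rw [mul_add, mul_one]; exact_mod_cast this
    omega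

theorem stmt_1_general (n k r d : ℕ) (M : ℝ) (hM : 0 < M) (hk : 0 < k)
    (hd1 : 1 ≤ d) (hdn : d ≤ n)
    (H : Finset (Fin n) → ℝ)
    (hH0 : H ∅ = 0)
    (hmono : ∀ S T : Finset (Fin n), S ⊆ T → H S ≤ H T)
    (hsub : ∀ S T : Finset (Fin n), H (S ∪ T) + H (S ∩ T) ≤ H S + H T)
    (hsingle : ∀ i : Fin n, H {i} = M / k)
    (hloc : ∀ i : Fin n, ∃ R : Finset (Fin n),
      i ∉ R ∧ R.card ≤ r ∧ H (insert i R) = H R)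
    (hdist : ∀ S : Finset (Fin n), n - d + 1 ≤ S.card → M ≤ H S) :
    (d : ℤ) ≤ (n : ℤ) - ⌈(k : ℚ) / (r : ℚ)⌉ - (k : ℤ) + 2 := by
  by_contra! hcon
  set s := n - d + 1
  have hjs : (s + 1 - k) * (r + 1) ≤ s := sub_add_one_mul_succ_le hk (by omega)
  obtain ⟨T, hTcard, hTH⟩ := exists_card_eq_apply_le_of_locality hH0 (fun S T h => hmono S T h)
    hsub (fun i => (hsingle i).le) hloc hjs (by simp; omega)
  have hrounds : (s : ℝ) - (s + 1 - k : ℕ) ≤ k - 1 := by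
    have : (s : ℝ) + 1 ≤ (s + 1 - k : ℕ) + k := by
      exact_mod_cast (by omega : s + 1 ≤ s + 1 - k + k)
    linarith
  have hkpos : (0 : ℝ) < k := by exact_mod_cast hk
  have hkM : ((k : ℝ) - 1) * (M / k) < M := by
    rw [sub_mul, one_mul, mul_div_cancel₀ M hkpos.ne']
    linarith [div_pos hM hkpos]
  exact (calc M ≤ H T := hdist T hTcard.ge
    _ ≤ (s - (s + 1 - k : ℕ)) * (M / k) := hTH
    _ ≤ (k - 1) * (M / k) := by gcongr
    _ < M := hkM).false

/-- For any code of length `n` in which each coded block has entropy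
`M/k` and has locality `r`, the minimum distance satisfies
`d ≤ n - ⌈k/r⌉ - k + 2`.  The minimum distance hypothesis states that any
`n - d + 1` blocks have entropy at least `M` (i.e. reconstruct the file). -/
theorem stmt_1 (n k r d : ℕ) (M : ℝ) (hM : 0 < M) (hk : 0 < k) (hr : 0 < r)
    (hd1 : 1 ≤ d) (hdn : d ≤ n)
    (H : Finset (Fin n) → ℝ)
    (hH0 : H ∅ = 0)
    (hmono : ∀ S T : Finset (Fin n), S ⊆ T → H S ≤ H T)
    (hsub : ∀ S T : Finset (Fin n), H (S ∪ T) + H (S ∩ T) ≤ H S + H T)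
    (hsingle : ∀ i : Fin n, H {i} = M / k)
    (hloc : ∀ i : Fin n, ∃ R : Finset (Fin n),
      i ∉ R ∧ R.card ≤ r ∧ H (insert i R) = H R)
    (hdist : ∀ S : Finset (Fin n), n - d + 1 ≤ S.card → M ≤ H S) :
    (d : ℤ) ≤ (n : ℤ) - ⌈(k : ℚ) / (r : ℚ)⌉ - (k : ℤ) + 2 :=
  stmt_1_general n k r d M hM hk hd1 hdn H hH0 hmono hsub hsingle hloc hdist
end

section
/- If d ≤ n - ⌈k/r⌉ - k + 2 with (r+1) dividing n, then the minimum source–data-collector cut in the information flow graph G(k, n-k, r, d) is at least M, where data collectors connect to any n-d+1 of the n coded block nodes, groups of r+1 blocks are bottlenecked by an edge of capacity r·M/k, and each block node has internal edge capacity M/k. -/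
/-! A cut severs `b` group edges and `c` block edges, so its capacity is `(r b + c) M / k` and it
suffices to show `k ≤ r b + c`. If `b ≥ ⌈k/r⌉` the group edges alone carry `r b ≥ k`. Otherwise
the severed groups contain at most `(r + 1) b` of the `n - d + 1 ≥ ⌈k/r⌉ + k - 1` blocks the data
collector reads, every other such block must have its own edge cut, and
`r b + c ≥ ⌈k/r⌉ + k - 1 - b ≥ k`. -/

open Finset

theorem Finset.card_le_mul_card_add_card_of_forall_mem_or_mem {α β : Type*} [DecidableEq β]
    {f : α → β} {s u : Finset α} {t : Finset β} {m : ℕ}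
    (hcover : ∀ a ∈ s, f a ∈ t ∨ a ∈ u) (hfiber : ∀ b ∈ t, #{a ∈ s | f a = b} ≤ m) :
    #s ≤ m * #t + #u := by
  have hin : #{a ∈ s | f a ∈ t} ≤ m * #t :=
    card_le_mul_card_image_of_maps_to (fun a ha ↦ (mem_filter.1 ha).2) m fun b hb ↦
      (card_le_card fun a ha ↦ by simp_all).trans (hfiber b hb)
  have hout : {a ∈ s | f a ∉ t} ⊆ u := fun a ha ↦
    (hcover a (mem_filter.1 ha).1).resolve_left (mem_filter.1 ha).2
  have := card_le_card hout
  have := card_filter_add_card_filter_not (s := s) (fun a ↦ f a ∈ t)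
  omega

theorem Int.le_mul_ceil_div {k r : ℕ} (hr : 0 < r) : (k : ℤ) ≤ r * ⌈(k : ℚ) / r⌉ := by
  have h := Int.le_ceil ((k : ℚ) / r)
  rw [div_le_iff₀ (by exact_mod_cast hr)] at h
  exact_mod_cast (by linarith : (k : ℚ) ≤ r * (⌈(k : ℚ) / r⌉ : ℚ))

theorem le_mul_add_of_ceil_div_add_le {k r a b c : ℕ} (hr : 0 < r) (ha : a ≤ (r + 1) * b + c)
    (hka : ⌈(k : ℚ) / r⌉ + k - 1 ≤ (a : ℤ)) : k ≤ r * b + c := by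
  have hceil := Int.le_mul_ceil_div (k := k) hr
  zify at ha ⊢
  rcases le_or_gt ⌈(k : ℚ) / r⌉ (b : ℤ) with hb | hb
  · nlinarith
  · linarith

theorem stmt_4_general (n k r d : ℕ) (M : ℝ) (hM : 0 < M) (hk : 0 < k) (hr : 0 < r)
    (hdn : d ≤ n)
    (grp : Fin n → Fin (n / (r + 1)))
    (hgrp : ∀ j, (Finset.univ.filter fun i => grp i = j).card = r + 1)
    (hd : (d : ℤ) ≤ (n : ℤ) - ⌈(k : ℚ) / (r : ℚ)⌉ - (k : ℤ) + 2)
    (A : Finset (Fin n)) (hA : A.card = n - d + 1)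
    (B : Finset (Fin (n / (r + 1)))) (C : Finset (Fin n))
    (hcut : ∀ i ∈ A, grp i ∈ B ∨ i ∈ C) :
    M ≤ (B.card : ℝ) * ((r : ℝ) * (M / k)) + (C.card : ℝ) * (M / k) := by
  have hcover : #A ≤ (r + 1) * #B + #C :=
    card_le_mul_card_add_card_of_forall_mem_or_mem hcut fun j _ ↦
      (card_le_card (filter_subset_filter _ (subset_univ A))).trans (hgrp j).le
  have hkA : ⌈(k : ℚ) / r⌉ + k - 1 ≤ (#A : ℤ) := by
    rw [hA]; push_cast [Nat.cast_sub hdn]; linarith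
  have hkey : (k : ℝ) ≤ r * #B + #C := by
    exact_mod_cast le_mul_add_of_ceil_div_add_le hr hcover hkA
  have hk0 : (k : ℝ) ≠ 0 := by positivity
  calc M = k * (M / k) := by field_simp
    _ ≤ (r * #B + #C) * (M / k) := by gcongr
    _ = (B.card : ℝ) * ((r : ℝ) * (M / k)) + (C.card : ℝ) * (M / k) := by ring

/-- If `d ≤ n - ⌈k/r⌉ - k + 2` with `(r+1) ∣ n`, then the minimum
source–data-collector cut in the information flow graph `G(k, n-k, r, d)` is at
least `M`.  A data collector connects to a set `A` of `n - d + 1` block nodes.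
A (finite-capacity) cut is described by the set `B` of severed group bottleneck
edges (capacity `r·M/k` each) and the set `C` of severed block edges (capacity
`M/k` each); it must sever every source-to-collector path, i.e. for every
`i ∈ A` either its group's bottleneck edge or its own block edge is cut. -/
theorem stmt_4 (n k r d : ℕ) (M : ℝ) (hM : 0 < M) (hk : 0 < k) (hr : 0 < r)
    (hd1 : 1 ≤ d) (hdn : d ≤ n) (hdvd : (r + 1) ∣ n)
    (grp : Fin n → Fin (n / (r + 1)))
    (hgrp : ∀ j, (Finset.univ.filter fun i => grp i = j).card = r + 1)
    (hd : (d : ℤ) ≤ (n : ℤ) - ⌈(k : ℚ) / (r : ℚ)⌉ - (k : ℤ) + 2)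
    (A : Finset (Fin n)) (hA : A.card = n - d + 1)
    (B : Finset (Fin (n / (r + 1)))) (C : Finset (Fin n))
    (hcut : ∀ i ∈ A, grp i ∈ B ∨ i ∈ C) :
    M ≤ (B.card : ℝ) * ((r : ℝ) * (M / k)) + (C.card : ℝ) * (M / k) :=
  stmt_4_general n k r d M hM hk hr hdn grp hgrp hd A hA B C hcut
end

section
/- For a code of length 16 storing k = 10 data blocks where each coded block has locality 5, the minimum distance is at most 5. -/
/-!
Let `m = M / 10` and write `G i = {i} ∪ R i` for the repair group of block `i`. Three pairwise
disjoint repair groups would need `18 > 16` blocks, so there are two groups `G a`, `G y` that meet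
although `y ∉ G a`. Their union has at most `11` blocks; in any `11`-set `S` containing it,
first `y` and then `a` are determined by the remaining blocks, so `H S ≤ 9 m < M`. Hence `11`
blocks need not recover the file, i.e. `16 - d + 1 > 11`.
-/

open Finset

theorem exists_notMem_not_disjoint {α : Type*} [Fintype α] [DecidableEq α] {k : ℕ}
    (G : α → Finset α) (hcard : ∀ i, #(G i) = k)
    (hlow : 2 * k < Fintype.card α) (hup : Fintype.card α < 3 * k) :
    ∃ a y, y ∉ G a ∧ ¬Disjoint (G a) (G y) := by
  by_contra! hdisj
  obtain ⟨a⟩ : Nonempty α := Fintype.card_pos_iff.mp (by omega)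
  obtain ⟨x, -, hxa⟩ := exists_mem_notMem_of_card_lt_card (s := G a) (t := univ)
    (by rw [hcard, card_univ]; omega)
  obtain ⟨y, -, hyax⟩ := exists_mem_notMem_of_card_lt_card (s := G a ∪ G x) (t := univ)
    (by grw [card_union_le, hcard, hcard, card_univ]; omega)
  rw [mem_union, not_or] at hyax
  have hthree : #(G a ∪ G x ∪ G y) = 3 * k := by
    rw [card_union_of_disjoint (disjoint_union_left.mpr ⟨hdisj a y hyax.1, hdisj x y hyax.2⟩),
      card_union_of_disjoint (hdisj a x hxa), hcard, hcard, hcard]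
    ring
  have := card_le_univ (G a ∪ G x ∪ G y)
  omega

section SetFunction

variable {α : Type*} [DecidableEq α] {H : Finset α → ℝ}

theorem le_add_of_submodular (hH0 : H ∅ = 0) (hmono : ∀ S T, S ⊆ T → H S ≤ H T)
    (hsub : ∀ S T, H (S ∪ T) + H (S ∩ T) ≤ H S + H T) (S T : Finset α) :
    H (S ∪ T) ≤ H S + H T := by
  linarith [hsub S T, hmono ∅ (S ∩ T) (empty_subset _)]

theorem le_card_mul_of_subadditive (hH0 : H ∅ = 0) {m : ℝ} (hsingle : ∀ i, H {i} ≤ m)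
    (hsubadd : ∀ S T, H (S ∪ T) ≤ H S + H T) (S : Finset α) :
    H S ≤ #S * m := by
  induction S using Finset.induction_on with
  | empty => simp [hH0]
  | insert i S hi ih =>
    rw [card_insert_of_notMem hi, insert_eq]
    push_cast
    linarith [hsubadd {i} S, hsingle i]

theorem eq_erase_of_repair (hmono : ∀ S T, S ⊆ T → H S ≤ H T)
    (hsub : ∀ S T, H (S ∪ T) + H (S ∩ T) ≤ H S + H T) {R S : Finset α} {i : α}
    (hi : i ∈ S) (hR : R ⊆ S.erase i) (hrep : H (insert i R) = H R) :
    H S = H (S.erase i) := by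
  have hunion : insert i R ∪ S.erase i = S := by
    rw [insert_union, union_eq_right.mpr hR, insert_erase hi]
  have hinter : insert i R ∩ S.erase i = R := by
    rw [insert_inter_of_notMem (notMem_erase i S), inter_eq_left.mpr hR]
  have := hsub (insert i R) (S.erase i)
  rw [hunion, hinter, hrep] at this
  exact le_antisymm (by linarith) (hmono _ _ (erase_subset i S))

end SetFunction

theorem stmt_5_general (M : ℝ) (hM : 0 < M) (d : ℕ)
    (H : Finset (Fin 16) → ℝ)
    (hH0 : H ∅ = 0)
    (hmono : ∀ S T : Finset (Fin 16), S ⊆ T → H S ≤ H T)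
    (hsub : ∀ S T : Finset (Fin 16), H (S ∪ T) + H (S ∩ T) ≤ H S + H T)
    (hsingle : ∀ i : Fin 16, H {i} = M / 10)
    (hloc : ∀ i : Fin 16, ∃ R : Finset (Fin 16),
      i ∉ R ∧ R.card = 5 ∧ H (insert i R) = H R)
    (hdist : ∀ S : Finset (Fin 16), 16 - d + 1 ≤ S.card → M ≤ H S) :
    d ≤ 5 := by
  by_contra! hd
  choose R hiR hRcard hRH using hloc
  have hGcard (i : Fin 16) : #(insert i (R i)) = 6 := by rw [card_insert_of_notMem (hiR i), hRcard]
  obtain ⟨a, y, hya, hmeet⟩ := exists_notMem_not_disjoint (fun i ↦ insert i (R i))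
    hGcard (by simp) (by simp)
  have hunion : #(insert a (R a) ∪ insert y (R y)) ≤ 11 := by
    have := card_union_add_card_inter (insert a (R a)) (insert y (R y))
    have := (not_disjoint_iff_nonempty_inter.mp hmeet).card_pos
    rw [hGcard, hGcard] at *
    omega
  obtain ⟨S, hGS, hScard⟩ := exists_superset_card_eq hunion (by simp)
  rw [union_subset_iff, insert_subset_iff, insert_subset_iff] at hGS
  have hHS : H S = H ((S.erase y).erase a) := by
    rw [eq_erase_of_repair hmono hsub hGS.2.1 (fun z hz ↦ mem_erase.mpr ⟨by grind, hGS.2.2 hz⟩)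
      (hRH y)]
    exact eq_erase_of_repair hmono hsub (mem_erase.mpr ⟨by grind, hGS.1.1⟩)
      (fun z hz ↦ by grind) (hRH a)
  have hsmall := le_card_mul_of_subadditive hH0 (fun i ↦ (hsingle i).le)
    (le_add_of_submodular hH0 hmono hsub) ((S.erase y).erase a)
  rw [card_erase_of_mem (by grind), card_erase_of_mem hGS.2.1, hScard] at hsmall
  linarith [hdist S (by omega)]

/-- For a code of length 16 storing `k = 10` data blocks where each
coded block has entropy `M/10` and locality 5, the minimum distance is at most 5
(any `16 - d + 1` blocks reconstruct the file of entropy `M`). -/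
theorem stmt_5 (M : ℝ) (hM : 0 < M) (d : ℕ) (hd1 : 1 ≤ d) (hdn : d ≤ 16)
    (H : Finset (Fin 16) → ℝ)
    (hH0 : H ∅ = 0)
    (hmono : ∀ S T : Finset (Fin 16), S ⊆ T → H S ≤ H T)
    (hsub : ∀ S T : Finset (Fin 16), H (S ∪ T) + H (S ∩ T) ≤ H S + H T)
    (hsingle : ∀ i : Fin 16, H {i} = M / 10)
    (hloc : ∀ i : Fin 16, ∃ R : Finset (Fin 16),
      i ∉ R ∧ R.card = 5 ∧ H (insert i R) = H R)
    (hdist : ∀ S : Finset (Fin 16), 16 - d + 1 ≤ S.card → M ≤ H S) :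
    d ≤ 5 :=
  stmt_5_general M hM d H hH0 hmono hsub hsingle hloc hdist
end

section
/- In the greedy set-building procedure for the distance bound, at each step where a full repair group is added (line 5), the entropy increase h_i and cardinality increase s_i satisfy s_i ≥ (k/M)·h_i + 1. -/
/-! A submodular set function `H` with `H ∅ = 0` is subadditive, so adding the blocks of
`Γ(j) \ S` to `S` raises `H` by at most the sum of their singleton entropies. Because
`H(Y_j | Y_{R_j}) = 0`, submodularity shows that the block `j` itself contributes nothing, so
only the `s - 1` blocks of `R_j \ S` count, each with entropy `M / k`. -/

namespace Finset

variable {α : Type*} [DecidableEq α] {H : Finset α → ℝ}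

theorem submodular_union_le_of_disjoint (hH0 : H ∅ = 0)
    (hsub : ∀ S T : Finset α, H (S ∪ T) + H (S ∩ T) ≤ H S + H T)
    {S T : Finset α} (hST : Disjoint S T) : H (S ∪ T) ≤ H S + H T := by
  have := hsub S T
  rwa [disjoint_iff_inter_eq_empty.mp hST, hH0, add_zero] at this

theorem submodular_le_sum_singleton (hH0 : H ∅ = 0)
    (hsub : ∀ S T : Finset α, H (S ∪ T) + H (S ∩ T) ≤ H S + H T) (T : Finset α) :
    H T ≤ ∑ t ∈ T, H {t} := by
  induction T using Finset.induction_on with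
  | empty => rw [hH0, sum_empty]
  | insert a T haT ih =>
    rw [sum_insert haT, insert_eq]
    have := submodular_union_le_of_disjoint hH0 hsub (disjoint_singleton_left.mpr haT)
    linarith

theorem submodular_union_sub_le_sum_sdiff (hH0 : H ∅ = 0)
    (hsub : ∀ S T : Finset α, H (S ∪ T) + H (S ∩ T) ≤ H S + H T) (S T : Finset α) :
    H (S ∪ T) - H S ≤ ∑ t ∈ T \ S, H {t} := by
  have hdisj := submodular_union_le_of_disjoint hH0 hsub (disjoint_sdiff (s := S) (t := T))
  rw [union_sdiff_self_eq_union] at hdisj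
  linarith [submodular_le_sum_singleton hH0 hsub (T \ S)]

theorem submodular_union_insert_le_of_eq
    (hsub : ∀ S T : Finset α, H (S ∪ T) + H (S ∩ T) ≤ H S + H T)
    {j : α} {R : Finset α} (hrep : H (insert j R) = H R) (S : Finset α) :
    H (S ∪ insert j R) ≤ H (S ∪ R) := by
  by_cases hjS : j ∈ S
  · rw [union_insert, insert_eq_of_mem (mem_union_left R hjS)]
  · have hunion : (S ∪ R) ∪ insert j R = S ∪ insert j R := by
      rw [union_insert, union_insert, union_assoc, union_self]
    have hinter : (S ∪ R) ∩ insert j R = R := by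
      ext x
      by_cases hx : x = j <;> simp_all
    have := hsub (S ∪ R) (insert j R)
    rw [hunion, hinter, hrep] at this
    linarith

end Finset

open Finset in
theorem stmt_8_general (n k : ℕ) (M : ℝ) (hM : 0 < M) (hk : 0 < k)
    (H : Finset (Fin n) → ℝ)
    (hH0 : H ∅ = 0)
    (hsub : ∀ S T : Finset (Fin n), H (S ∪ T) + H (S ∩ T) ≤ H S + H T)
    (hsingle : ∀ i : Fin n, H {i} = M / k)
    (S : Finset (Fin n)) (j : Fin n) (Rj : Finset (Fin n))
    (hjR : j ∉ Rj)
    (hrep : H (insert j Rj) = H Rj)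
    (hjS : j ∉ S) :
    ((k : ℝ) / M) * (H (S ∪ insert j Rj) - H S) + 1 ≤
      (((insert j Rj) \ S).card : ℝ) := by
  have hgain : H (S ∪ insert j Rj) - H S ≤ (Rj \ S).card * (M / k) := by
    have := submodular_union_sub_le_sum_sdiff hH0 hsub S Rj
    simp only [hsingle, sum_const, nsmul_eq_mul] at this
    linarith [submodular_union_insert_le_of_eq hsub hrep S]
  have hcard : ((insert j Rj) \ S).card = (Rj \ S).card + 1 := by
    rw [insert_sdiff_of_notMem Rj hjS, card_insert_of_notMem (fun h => hjR (mem_sdiff.mp h).1)]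
  rw [hcard, Nat.cast_add_one, add_le_add_iff_right]
  calc (k : ℝ) / M * (H (S ∪ insert j Rj) - H S)
      ≤ k / M * ((Rj \ S).card * (M / k)) := mul_le_mul_of_nonneg_left hgain (by positivity)
    _ = (Rj \ S).card := by field_simp

/-- In the greedy set-building procedure, at a step where a full
repair group `Γ(j) = insert j Rj` (with `H(Y_j | Y_{Rj}) = 0`, i.e.
`H (insert j Rj) = H Rj`) is added to the current set `S` (with `j ∉ S`), the
entropy increase `h` and cardinality increase `s` satisfy `s ≥ (k/M)·h + 1`. -/
theorem stmt_8 (n k r : ℕ) (M : ℝ) (hM : 0 < M) (hk : 0 < k)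
    (H : Finset (Fin n) → ℝ)
    (hH0 : H ∅ = 0)
    (hmono : ∀ S T : Finset (Fin n), S ⊆ T → H S ≤ H T)
    (hsub : ∀ S T : Finset (Fin n), H (S ∪ T) + H (S ∩ T) ≤ H S + H T)
    (hsingle : ∀ i : Fin n, H {i} = M / k)
    (S : Finset (Fin n)) (j : Fin n) (Rj : Finset (Fin n))
    (hjR : j ∉ Rj) (hRcard : Rj.card ≤ r)
    (hrep : H (insert j Rj) = H Rj)
    (hjS : j ∉ S) :
    ((k : ℝ) / M) * (H (S ∪ insert j Rj) - H S) + 1 ≤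
      (((insert j Rj) \ S).card : ℝ) :=
  stmt_8_general n k M hM hk H hH0 hsub hsingle S j Rj hjR hrep hjS
end

section
/- If a multicast session at rate M is feasible on the information flow graph G(k, n-k, r, d), then there exists a (k, n-k) code with locality r and minimum distance at least d. -/
/-!
Take the generic code in which every group of `r + 1` blocks consists of `r` blocks carrying
independent indeterminate linear forms and a local parity block, their sum; each block is then a
linear combination of the other `r` blocks of its group. Given `n - d + 1` blocks `A`, feasibility
applied to the cut made of the groups inside `A` and the remaining blocks of `A` shows that after
dropping one block from each group inside `A`, there remain `k` blocks of `A` that leave out at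
least one block of every group. The generic `k × k` submatrix on those blocks specializes to the identity matrix (the
missing block of each group absorbs its parity constraint), so its determinant is a nonzero
polynomial and those `k` blocks determine the message.
-/

open Finset MvPolynomial

section Codes

variable {κ ι ι' F : Type*}

def IsLocallyRecoverable (enc : (κ → F) → ι → F) (r : ℕ) : Prop :=
  ∀ i, ∃ R : Finset ι, i ∉ R ∧ R.card ≤ r ∧ ∃ f : (ι → F) → F,
    (∀ y y' : ι → F, (∀ j ∈ R, y j = y' j) → f y = f y') ∧ ∀ x, enc x i = f (enc x)

def IsRecoverableFrom (enc : (κ → F) → ι → F) (A : Finset ι) : Prop :=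
  ∀ x y : κ → F, (∀ i ∈ A, enc x i = enc y i) → x = y

theorem IsLocallyRecoverable.comp_equiv {enc : (κ → F) → ι → F} {r : ℕ}
    (h : IsLocallyRecoverable enc r) (e : ι' ≃ ι) :
    IsLocallyRecoverable (fun x i => enc x (e i)) r := by
  intro i
  obtain ⟨R, hiR, hR, f, hf, henc⟩ := h (e i)
  refine ⟨R.map e.symm.toEmbedding, by simpa using hiR, by simpa using hR,
    fun y => f (y ∘ e.symm), fun y y' hyy' => hf _ _ fun j hj => ?_, fun x => ?_⟩
  · exact hyy' _ (mem_map_of_mem _ hj)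
  · simp only [henc, Function.comp_def, Equiv.apply_symm_apply]

theorem IsRecoverableFrom.comp_embedding {enc : (κ → F) → ι → F} {A : Finset ι'} (e : ι' ↪ ι)
    (h : IsRecoverableFrom enc (A.map e)) : IsRecoverableFrom (fun x i => enc x (e i)) A :=
  fun x y hxy => h x y (by simpa using hxy)

theorem IsRecoverableFrom.mono {enc : (κ → F) → ι → F} {S A : Finset ι}
    (h : IsRecoverableFrom enc S) (hSA : S ⊆ A) : IsRecoverableFrom enc A :=
  fun x y hxy => h x y fun i hi => hxy i (hSA hi)

variable [Fintype κ]

theorem isLocallyRecoverable_mulVec [CommSemiring F] (G : Matrix ι κ F) {r : ℕ}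
    (hG : ∀ i, ∃ R : Finset ι, i ∉ R ∧ R.card ≤ r ∧ ∃ c : ι → F, G i = ∑ j ∈ R, c j • G j) :
    IsLocallyRecoverable G.mulVec r := by
  intro i
  obtain ⟨R, hiR, hR, c, hc⟩ := hG i
  refine ⟨R, hiR, hR, fun y => ∑ j ∈ R, c j * y j,
    fun y y' hyy' => sum_congr rfl fun j hj => by rw [hyy' j hj], fun x => ?_⟩
  simp only [Matrix.mulVec, hc, sum_dotProduct, smul_dotProduct, smul_eq_mul]

theorem isRecoverableFrom_mulVec [Field F] [DecidableEq κ] (G : Matrix ι κ F) {e : κ → ι}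
    (hdet : (G.submatrix e id).det ≠ 0) {A : Finset ι} (hA : ∀ s, e s ∈ A) :
    IsRecoverableFrom G.mulVec A := fun _ _ hxy =>
  Matrix.mulVec_injective_iff_isUnit.2 (Matrix.isUnit_iff_isUnit_det _ |>.2 hdet.isUnit)
    (funext fun s => hxy _ (hA s))

end Codes

section LocalParity

variable {M N : Type*} {r : ℕ}

def snocSum [AddCommMonoid M] (Y : Fin r → M) : Fin (r + 1) → M :=
  Fin.snoc Y (∑ t, Y t)

@[simp] theorem snocSum_castSucc [AddCommMonoid M] (Y : Fin r → M) (t : Fin r) :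
    snocSum Y t.castSucc = Y t :=
  Fin.snoc_castSucc (α := fun _ => M) ..

@[simp] theorem snocSum_last [AddCommMonoid M] (Y : Fin r → M) :
    snocSum Y (Fin.last r) = ∑ t, Y t :=
  Fin.snoc_last (α := fun _ => M) ..

theorem map_snocSum [AddCommMonoid M] [AddCommMonoid N] {H : Type*} [FunLike H M N]
    [AddMonoidHomClass H M N] (f : H) (Y : Fin r → M) (p : Fin (r + 1)) :
    f (snocSum Y p) = snocSum (f ∘ Y) p := by
  induction p using Fin.lastCases <;> simp [map_sum]

theorem eq_sum_erase_smul_of_sum_smul_eq_zero {R ι : Type*} [Ring R] [AddCommGroup M] [Module R M]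
    [Fintype ι] [DecidableEq ι] {ε : ι → R} {w : ι → M} (h : ∑ q, ε q • w q = 0) {p : ι}
    (hp : ε p * ε p = 1) : w p = ∑ q ∈ univ.erase p, (-(ε p * ε q)) • w q := by
  have herase : ∑ q ∈ univ.erase p, ε q • w q = -(ε p • w p) := by
    rw [sum_erase_eq_sub (mem_univ p), h, zero_sub]
  calc w p = (ε p * ε p) • w p := by rw [hp, one_smul]
    _ = -(ε p • ∑ q ∈ univ.erase p, ε q • w q) := by rw [herase, smul_neg, neg_neg, mul_smul]
    _ = ∑ q ∈ univ.erase p, (-(ε p * ε q)) • w q := by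
      simp only [smul_sum, neg_smul, mul_smul, sum_neg_distrib]

theorem exists_snocSum_eq_sum_erase_smul (R : Type*) [Ring R] [AddCommGroup M] [Module R M]
    (Y : Fin r → M) (p : Fin (r + 1)) :
    ∃ c : Fin (r + 1) → R, snocSum Y p = ∑ q ∈ univ.erase p, c q • snocSum Y q := by
  let ε : Fin (r + 1) → R := Fin.snoc (fun _ => 1) (-1)
  have hrel : ∑ q, ε q • snocSum Y q = 0 := by
    simp [ε, Fin.sum_univ_castSucc]
  have hp : ε p * ε p = 1 := by
    induction p using Fin.lastCases <;> simp [ε]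
  exact ⟨_, eq_sum_erase_smul_of_sum_smul_eq_zero hrel hp⟩

theorem exists_snocSum_eq_of_ne [AddCommGroup M] (v : Fin (r + 1) → M) (q : Fin (r + 1)) :
    ∃ Y : Fin r → M, ∀ p ≠ q, snocSum Y p = v p := by
  classical
  induction q using Fin.lastCases with
  | last =>
    refine ⟨v ∘ Fin.castSucc, fun p hp => ?_⟩
    induction p using Fin.lastCases with
    | last => exact absurd rfl hp
    | cast t => simp
  | cast t₀ =>
    refine ⟨Function.update (v ∘ Fin.castSucc) t₀ (v (Fin.last r) - ∑ t ∈ univ \ {t₀}, v t.castSucc),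
      fun p hp => ?_⟩
    induction p using Fin.lastCases with
    | last => simp [sum_update_of_mem (mem_univ t₀)]
    | cast t =>
      have ht : t ≠ t₀ := fun h => hp (h ▸ rfl)
      simp [ht]

end LocalParity

section LocalParityMatrix

variable {r : ℕ} {β κ R S : Type*}

def localParityMatrix [AddCommMonoid R] (Y : β → Fin r → κ → R) : Matrix (β × Fin (r + 1)) κ R :=
  Matrix.of fun i => snocSum (Y i.1) i.2

theorem localParityMatrix_map [AddCommMonoid R] [AddCommMonoid S] {H : Type*} [FunLike H R S]
    [AddMonoidHomClass H R S] (f : H) (Y : β → Fin r → κ → R) :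
    (localParityMatrix Y).map f = localParityMatrix fun j t => f ∘ Y j t := by
  ext ⟨j, p⟩ s
  induction p using Fin.lastCases <;> simp [localParityMatrix, map_sum]

theorem isLocallyRecoverable_localParityMatrix {F : Type*} [CommRing F] [Fintype κ]
    (Y : β → Fin r → κ → F) : IsLocallyRecoverable (localParityMatrix Y).mulVec r := by
  classical
  refine isLocallyRecoverable_mulVec _ fun ⟨j, p⟩ => ?_
  obtain ⟨c, hc⟩ := exists_snocSum_eq_sum_erase_smul F (Y j) p
  refine ⟨(univ.erase p).map (.sectR j _), by simp, by simp, fun i => c i.2, ?_⟩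
  rw [sum_map]
  exact hc

theorem exists_localParityMatrix_eq [AddCommGroup R] (V : β × Fin (r + 1) → κ → R)
    {T : Set (β × Fin (r + 1))} (hT : ∀ j, ∃ q, (j, q) ∉ T) :
    ∃ Y : β → Fin r → κ → R, ∀ i ∈ T, localParityMatrix Y i = V i := by
  choose q hq using hT
  choose Y hY using fun j => exists_snocSum_eq_of_ne (fun p => V (j, p)) (q j)
  refine ⟨Y, fun ⟨j, p⟩ hi => hY j p ?_⟩
  rintro rfl
  exact hq j hi

variable (r β κ) (K : Type*) [CommRing K]

noncomputable def genericLocalParityMatrix :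
    Matrix (β × Fin (r + 1)) κ (MvPolynomial (β × Fin r × κ) K) :=
  localParityMatrix fun j t s => X (j, t, s)

theorem det_submatrix_genericLocalParityMatrix_ne_zero [Nontrivial K] [Fintype κ] [DecidableEq κ]
    {e : κ → β × Fin (r + 1)} (he : e.Injective) (hfree : ∀ j, ∃ q, (j, q) ∉ Set.range e) :
    ((genericLocalParityMatrix r β κ K).submatrix e id).det ≠ 0 := by
  classical
  -- A specialization of the indeterminates that makes the rows indexed by `e` the unit vectors.
  obtain ⟨Y, hY⟩ := exists_localParityMatrix_eq (fun i s => if i = e s then (1 : K) else 0) hfree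
  have heval : (genericLocalParityMatrix r β κ K).map (eval fun v => Y v.1 v.2.1 v.2.2) =
      localParityMatrix Y := by
    rw [genericLocalParityMatrix, localParityMatrix_map]
    simp [Function.comp_def]
  have hone : (eval fun v => Y v.1 v.2.1 v.2.2).mapMatrix
      ((genericLocalParityMatrix r β κ K).submatrix e id) = 1 := by
    ext s s'
    rw [RingHom.mapMatrix_apply, ← Matrix.submatrix_map, heval, Matrix.submatrix_apply,
      hY (e s) ⟨s, rfl⟩]
    simp [he.eq_iff, Matrix.one_apply]
  intro h
  simpa [h, hone] using RingHom.map_det (eval fun v => Y v.1 v.2.1 v.2.2)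
    ((genericLocalParityMatrix r β κ K).submatrix e id)

end LocalParityMatrix

section GenericCode

variable (r : ℕ) (β κ K : Type*) [CommRing K]

noncomputable def genericLocalParityCode :
    Matrix (β × Fin (r + 1)) κ (FractionRing (MvPolynomial (β × Fin r × κ) K)) :=
  (genericLocalParityMatrix r β κ K).map (algebraMap _ _)

theorem isLocallyRecoverable_genericLocalParityCode [Fintype κ] :
    IsLocallyRecoverable (genericLocalParityCode r β κ K).mulVec r := by
  rw [genericLocalParityCode, genericLocalParityMatrix, localParityMatrix_map]
  exact isLocallyRecoverable_localParityMatrix _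

variable {r β κ K} in
theorem isRecoverableFrom_genericLocalParityCode [IsDomain K] [Fintype κ] [DecidableEq κ]
    {T : Finset (β × Fin (r + 1))} (hT : #T = Fintype.card κ) (hfree : ∀ j, ∃ q, (j, q) ∉ T) :
    IsRecoverableFrom (genericLocalParityCode r β κ K).mulVec T := by
  let σ : κ ≃ T := Fintype.equivOfCardEq (by rw [Fintype.card_coe, hT])
  refine isRecoverableFrom_mulVec _ (e := fun s => (σ s : β × Fin (r + 1))) ?_ fun s => (σ s).2
  rw [genericLocalParityCode, Matrix.submatrix_map, ← RingHom.mapMatrix_apply, ← RingHom.map_det]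
  refine (map_ne_zero_iff _ (IsFractionRing.injective _ _)).2
    (det_submatrix_genericLocalParityMatrix_ne_zero r β κ K
      (Subtype.val_injective.comp σ.injective) fun j => ?_)
  obtain ⟨q, hq⟩ := hfree j
  exact ⟨q, fun ⟨s, hs⟩ => hq (hs ▸ (σ s).2)⟩

end GenericCode

section Cuts

variable {α β : Type*} [Fintype α] [Fintype β] [DecidableEq β] {r k : ℕ}

theorem exists_subset_card_eq_of_forall_cut (f : α → β) (hf : ∀ b, r + 1 ≤ #{a | f a = b})
    (A : Finset α)
    (hcut : ∀ (B : Finset β) (C : Finset α), (∀ a ∈ A, f a ∈ B ∨ a ∈ C) → k ≤ r * #B + #C) :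
    ∃ S ⊆ A, #S = k ∧ ∀ b, ∃ a, f a = b ∧ a ∉ S := by
  classical
  -- The cut whose bottleneck edges are the groups lying entirely inside `A`.
  set B : Finset β := {b | ({a | f a = b} : Finset α) ⊆ A}
  set C : Finset α := {a ∈ A | f a ∉ B}
  have hkBC : k ≤ r * #B + #C := hcut B C fun a _ => or_iff_not_imp_left.2 fun h => by simp [C, *]
  have hBA : (r + 1) * #B ≤ #{a ∈ A | f a ∈ B} := by
    rw [card_eq_sum_card_fiberwise (s := {a ∈ A | f a ∈ B}) (t := B) fun a ha => (mem_filter.1 ha).2,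
      mul_comm, ← smul_eq_mul, ← sum_const]
    refine sum_le_sum fun b hb => (hf b).trans (card_le_card fun a ha => ?_)
    have hfa : f a = b := (mem_filter.1 ha).2
    simp only [mem_filter, hfa, hb, and_true]
    exact (mem_filter.1 hb).2 ha
  have hCA := card_filter_add_card_filter_not (s := A) (fun a => f a ∈ B)
  -- Dropping one block `g b` of every group `b ∈ B` leaves at least `k` blocks.
  choose g hg using fun b => card_pos.1 (Nat.succ_pos r |>.trans_le (hf b))
  simp only [mem_filter, mem_univ, true_and] at hg
  have hgB : B.image g ⊆ A := image_subset_iff.2 fun b hb => (mem_filter.1 hb).2 (by simp [hg])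
  have hcard_gB : #(B.image g) = #B := card_image_of_injective _ (Function.LeftInverse.injective hg)
  obtain ⟨S, hS, hSk⟩ := exists_subset_card_eq (s := A \ B.image g) (n := k) (by
    rw [card_sdiff_of_subset hgB, hcard_gB]
    lia)
  refine ⟨S, hS.trans sdiff_subset, hSk, fun b => ?_⟩
  by_cases hb : b ∈ B
  · exact ⟨g b, hg b, fun h => (mem_sdiff.1 (hS h)).2 (mem_image_of_mem g hb)⟩
  · obtain ⟨a, ha, haA⟩ := not_subset.1 (by simpa [B] using hb)
    exact ⟨a, (mem_filter.1 ha).2, fun h => haA (mem_sdiff.1 (hS h)).1⟩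

end Cuts

theorem le_of_rate_le_cut_capacity {M : ℝ} (hM : 0 < M) {k r b c : ℕ}
    (h : M ≤ b * (r * (M / k)) + c * (M / k)) : k ≤ r * b + c := by
  rcases k.eq_zero_or_pos with rfl | hk
  · exact Nat.zero_le _
  have hk' : (0 : ℝ) < k := Nat.cast_pos.2 hk
  have hMk : (k : ℝ) * M ≤ (r * b + c) * M :=
    calc (k : ℝ) * M ≤ k * (b * (r * (M / k)) + c * (M / k)) := by gcongr
      _ = (r * b + c) * M := by field_simp
  exact_mod_cast le_of_mul_le_mul_right hMk hM

theorem exists_equiv_prod_fin_of_card_fiber {α β : Type*} [Fintype α] [DecidableEq β]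
    (f : α → β) {m : ℕ} (hf : ∀ b, #{a | f a = b} = m) :
    ∃ e : α ≃ β × Fin m, ∀ a, (e a).1 = f a :=
  ⟨(Equiv.sigmaFiberEquiv f).symm.trans <|
    (Equiv.sigmaCongrRight fun b =>
      Fintype.equivFinOfCardEq ((Fintype.card_subtype _).trans (hf b))).trans
    (Equiv.sigmaEquivProd _ _), fun _ => rfl⟩

theorem stmt_12_general (n k r d : ℕ) (M : ℝ) (hM : 0 < M)
    (grp : Fin n → Fin (n / (r + 1)))
    (hgrp : ∀ j, (Finset.univ.filter fun i => grp i = j).card = r + 1)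
    (hfeas : ∀ A : Finset (Fin n), A.card = n - d + 1 →
      ∀ (B : Finset (Fin (n / (r + 1)))) (C : Finset (Fin n)),
        (∀ i ∈ A, grp i ∈ B ∨ i ∈ C) →
        M ≤ (B.card : ℝ) * ((r : ℝ) * (M / k)) + (C.card : ℝ) * (M / k)) :
    ∃ (F : Type) (_ : Field F) (enc : (Fin k → F) → (Fin n → F)),
      (∀ i : Fin n, ∃ R : Finset (Fin n), i ∉ R ∧ R.card ≤ r ∧
        ∃ f : (Fin n → F) → F,
          (∀ y y' : Fin n → F, (∀ j ∈ R, y j = y' j) → f y = f y') ∧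
          ∀ x, enc x i = f (enc x)) ∧
      (∀ A : Finset (Fin n), A.card = n - d + 1 →
        ∀ x y : Fin k → F, (∀ i ∈ A, enc x i = enc y i) → x = y) := by
  obtain ⟨e, he⟩ := exists_equiv_prod_fin_of_card_fiber grp hgrp
  let G := genericLocalParityCode r (Fin (n / (r + 1))) (Fin k) ℚ
  refine ⟨_, inferInstance, fun x i => G.mulVec x (e i),
    (isLocallyRecoverable_genericLocalParityCode _ _ _ _).comp_equiv e, fun A hA => ?_⟩
  obtain ⟨S, hSA, hSk, hfree⟩ := exists_subset_card_eq_of_forall_cut grp (fun j => (hgrp j).ge) A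
    fun B C hBC => le_of_rate_le_cut_capacity hM (hfeas A hA B C hBC)
  refine (IsRecoverableFrom.comp_embedding e.toEmbedding ?_).mono hSA
  refine isRecoverableFrom_genericLocalParityCode (by simp [hSk]) fun j => ?_
  obtain ⟨i, rfl, hiS⟩ := hfree j
  exact ⟨(e i).2, by simpa [← he] using hiS⟩

/-- If a multicast session at rate `M` is feasible on the
information flow graph `G(k, n-k, r, d)` — i.e. for every data collector,
attached to a set `A` of `n-d+1` block nodes, every cut (a choice `B` of severed
group bottleneck edges of capacity `r·M/k` and `C` of severed block edges of
capacity `M/k` hitting every source-collector path) has capacity at least `M` —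
then there exists a `(k, n-k)` code with locality `r` and minimum distance at
least `d`: an encoder into `n` blocks where each block is a function of at most
`r` others and any `n-d+1` blocks determine the message. -/
theorem stmt_12 (n k r d : ℕ) (M : ℝ) (hM : 0 < M) (hk : 0 < k) (hr : 0 < r)
    (hd1 : 1 ≤ d) (hdn : d ≤ n) (hdvd : (r + 1) ∣ n)
    (grp : Fin n → Fin (n / (r + 1)))
    (hgrp : ∀ j, (Finset.univ.filter fun i => grp i = j).card = r + 1)
    (hfeas : ∀ A : Finset (Fin n), A.card = n - d + 1 →
      ∀ (B : Finset (Fin (n / (r + 1)))) (C : Finset (Fin n)),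
        (∀ i ∈ A, grp i ∈ B ∨ i ∈ C) →
        M ≤ (B.card : ℝ) * ((r : ℝ) * (M / k)) + (C.card : ℝ) * (M / k)) :
    ∃ (F : Type) (_ : Field F) (enc : (Fin k → F) → (Fin n → F)),
      (∀ i : Fin n, ∃ R : Finset (Fin n), i ∉ R ∧ R.card ≤ r ∧
        ∃ f : (Fin n → F) → F,
          (∀ y y' : Fin n → F, (∀ j ∈ R, y j = y' j) → f y = f y') ∧
          ∀ x, enc x i = f (enc x)) ∧
      (∀ A : Finset (Fin n), A.card = n - d + 1 →
        ∀ x y : Fin k → F, (∀ i ∈ A, enc x i = enc y i) → x = y) :=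
  stmt_12_general n k r d M hM grp hgrp hfeas
end

section
/- There exists a linear code over F_q with locality r, length n with (r+1) | n, and distance d = n - ⌈k/r⌉ - k + 2, provided q > C(n, k + ⌈k/r⌉ - 1). -/
/-!
Split the `n` coordinates into `n / (r + 1)` groups of `r + 1`, and take the generic matrix in
which the first `r` columns of each group are independent indeterminates and the last column is
minus their sum; every specialisation of it is then a code with locality `r`. A set of
`m = k + ⌈k/r⌉ - 1` coordinates contains fewer than `⌈k/r⌉` full groups, so it contains `k`
coordinates missing at least one point of every group, and the corresponding `k × k` minor is a
nonzero polynomial of degree at most one in each indeterminate. The product of one such minor per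
`m`-subset has degree at most `C(n, m) < q` in each indeterminate, so it does not vanish at some
point over `F`; at that point any `m` coordinates determine the message.
-/

open Finset MvPolynomial

namespace MvPolynomial

theorem exists_eval_ne_zero_of_degreeOf_lt_card {F σ : Type*} [Field F] [Fintype F] [Finite σ]
    {P : MvPolynomial σ F} (hP : P ≠ 0) (hdeg : ∀ i, P.degreeOf i < Fintype.card F) :
    ∃ x, eval x P ≠ 0 := by
  by_contra! h
  exact hP (eq_zero_of_eval_zero_at_prod_finset P (fun _ => univ) (by simpa using hdeg)
    fun x _ => h x)

theorem degreeOf_det_le {R σ n : Type*} [CommRing R] [Fintype n] [DecidableEq n]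
    (M : Matrix n n (MvPolynomial σ R)) (i : σ) (a₀ : n) (d : ℕ)
    (h : ∀ a c, (M a c).degreeOf i ≤ if a = a₀ then d else 0) : M.det.degreeOf i ≤ d := by
  rw [Matrix.det_apply]
  refine (degreeOf_sum_le i _ _).trans (Finset.sup_le fun τ _ => ?_)
  have hprod : (∏ c, M (τ c) c).degreeOf i ≤ d := calc
    _ ≤ ∑ c, (M (τ c) c).degreeOf i := degreeOf_prod_le i _ _
    _ ≤ ∑ c, if c = τ.symm a₀ then d else 0 :=
        sum_le_sum fun c _ => by simpa [← Equiv.eq_symm_apply] using h (τ c) c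
    _ = d := by simp
  rcases Int.units_eq_one_or (Equiv.Perm.sign τ) with hs | hs <;> simpa [hs, degreeOf_neg]

end MvPolynomial

theorem Rat.ceil_natCast_div_natCast_eq_add_pred_div {k r : ℕ} (hr : 0 < r) :
    ⌈(k : ℚ) / r⌉ = ((k + r - 1) / r : ℕ) := by
  have hle : k ≤ r * ((k + r - 1) / r) := (ceilDiv_le_iff_le_mul hr).1 le_rfl
  have hlt : r * ((k + r - 1) / r) < k + r :=
    (Nat.mul_div_le (k + r - 1) r).trans_lt (by omega)
  have hrq : (0 : ℚ) < r := by exact_mod_cast hr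
  have hle' : (k : ℚ) ≤ r * ((k + r - 1) / r : ℕ) := by exact_mod_cast hle
  have hlt' : (r : ℚ) * ((k + r - 1) / r : ℕ) < k + r := by exact_mod_cast hlt
  rw [Int.ceil_eq_iff, Int.cast_natCast, lt_div_iff₀ hrq, div_le_iff₀ hrq]
  constructor <;> linarith

theorem Submodule.mem_span_image_of_sum_filter_eq_zero {R M ι : Type*} [Ring R]
    [AddCommGroup M] [Module R M] [Fintype ι] [DecidableEq ι] {p : ι → Prop} [DecidablePred p]
    {v : ι → M} (h : ∑ j with p j, v j = 0) {i : ι} (hi : p i) :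
    v i ∈ Submodule.span R (v '' {j | p j ∧ j ≠ i}) := by
  have : v i = -∑ j ∈ (univ.filter p).erase i, v j := by
    rw [eq_neg_iff_add_eq_zero, add_sum_erase _ _ (by simpa using hi), h]
  rw [this]
  exact neg_mem (sum_mem fun j hj => subset_span ⟨j, by simpa [and_comm] using hj, rfl⟩)

theorem Equiv.sum_filter_fst_eq {ι γ τ M : Type*} [Fintype ι] [Fintype γ] [Fintype τ]
    [DecidableEq γ] [AddCommMonoid M] (e : ι ≃ γ × τ) (g : γ × τ → M) (j : γ) :
    ∑ i with (e i).1 = j, g (e i) = ∑ t, g (j, t) := by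
  rw [sum_filter, e.sum_comp fun β => if β.1 = j then g β else 0, Fintype.sum_prod_type]
  rw [Fintype.sum_eq_single j fun x hx => by simp [hx]]
  simp

theorem Matrix.eq_of_vecMul_eq_of_det_submatrix_ne_zero {K κ ι : Type*} [Field K] [Fintype κ]
    [DecidableEq κ] {G : Matrix κ ι K} {f : κ → ι} (hf : (G.submatrix id f).det ≠ 0)
    {x y : κ → K} (h : ∀ c, vecMul x G (f c) = vecMul y G (f c)) : x = y := by
  refine vecMul_injective_iff_isUnit.2 ((isUnit_iff_isUnit_det _).2 (isUnit_iff_ne_zero.2 hf)) ?_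
  ext c
  simpa [vecMul, dotProduct] using h c

section GenericLocalMatrix

variable (R : Type*) [CommRing R] (k r : ℕ) (γ : Type*)

noncomputable def genericLocalMatrix :
    Matrix (Fin k) (γ × Fin (r + 1)) (MvPolynomial (Fin k × γ × Fin r) R) :=
  Matrix.of fun a β => Fin.lastCases (-∑ u, X (a, β.1, u)) (fun u => X (a, β.1, u)) β.2

variable {R k r γ}

@[simp]
theorem genericLocalMatrix_castSucc (a : Fin k) (j : γ) (u : Fin r) :
    genericLocalMatrix R k r γ a (j, u.castSucc) = X (a, j, u) := by
  simp [genericLocalMatrix]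

@[simp]
theorem genericLocalMatrix_last (a : Fin k) (j : γ) :
    genericLocalMatrix R k r γ a (j, Fin.last r) = -∑ u, X (a, j, u) := by
  simp [genericLocalMatrix]

theorem sum_genericLocalMatrix (a : Fin k) (j : γ) :
    ∑ t, genericLocalMatrix R k r γ a (j, t) = 0 := by
  simp [Fin.sum_univ_castSucc]

theorem eval_genericLocalMatrix (v : γ × Fin (r + 1) → Fin k → R)
    (hv : ∀ j, ∑ t, v (j, t) = 0) (a : Fin k) (β : γ × Fin (r + 1)) :
    eval (fun x => v (x.2.1, x.2.2.castSucc) x.1) (genericLocalMatrix R k r γ a β) = v β a := by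
  obtain ⟨j, t⟩ := β
  induction t using Fin.lastCases with
  | cast u => simp
  | last =>
    have := congrFun (hv j) a
    rw [Fin.sum_univ_castSucc, Pi.add_apply, Finset.sum_apply] at this
    simp [eq_neg_of_add_eq_zero_right this]

theorem degreeOf_genericLocalMatrix_le [Nontrivial R] (i : Fin k × γ × Fin r) (a : Fin k)
    (β : γ × Fin (r + 1)) :
    (genericLocalMatrix R k r γ a β).degreeOf i ≤ if a = i.1 then 1 else 0 := by
  have hX : ∀ u, (X (a, β.1, u) : MvPolynomial (Fin k × γ × Fin r) R).degreeOf i ≤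
      if a = i.1 then 1 else 0 := by
    classical
    intro u
    rw [degreeOf_X]
    split_ifs with hi ha
    · exact le_rfl
    · exact absurd (by rw [hi]) ha
    all_goals exact Nat.zero_le _
  obtain ⟨j, t⟩ := β
  induction t using Fin.lastCases with
  | cast u => simpa using hX u
  | last =>
    simpa [degreeOf_neg] using (degreeOf_sum_le i _ _).trans (Finset.sup_le fun u _ => hX u)

theorem degreeOf_det_genericLocalMatrix_submatrix_le [Nontrivial R] (f : Fin k → γ × Fin (r + 1))
    (i : Fin k × γ × Fin r) : ((genericLocalMatrix R k r γ).submatrix id f).det.degreeOf i ≤ 1 :=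
  degreeOf_det_le _ i i.1 1 fun a c => degreeOf_genericLocalMatrix_le i a (f c)

theorem det_genericLocalMatrix_submatrix_ne_zero [Nontrivial R] {f : Fin k → γ × Fin (r + 1)}
    (hf : f.Injective) (hmiss : ∀ j, ∃ t, (j, t) ∉ Set.range f) :
    ((genericLocalMatrix R k r γ).submatrix id f).det ≠ 0 := by
  classical
  choose w hw using hmiss
  -- `e β` is the column that `β = f c` should have for the submatrix to be the identity; the
  -- column `(j, w j)`, which `f` misses, absorbs the relation of the group.
  let e : γ × Fin (r + 1) → Fin k → R := fun β a => if f a = β then 1 else 0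
  let v : γ × Fin (r + 1) → Fin k → R := fun β =>
    e β - if β.2 = w β.1 then ∑ t, e (β.1, t) else 0
  have hv : ∀ j, ∑ t, v (j, t) = 0 := by simp [v, Finset.sum_sub_distrib]
  have hvf : ∀ c, v (f c) = e (f c) := fun c => by
    have : (f c).2 ≠ w (f c).1 := fun h => hw (f c).1 ⟨c, by rw [← h]⟩
    simp [v, this]
  intro h
  have := congrArg (eval fun x => v (x.2.1, x.2.2.castSucc) x.1) h
  rw [RingHom.map_det, map_zero] at this
  refine one_ne_zero (((congrArg Matrix.det ?_).trans Matrix.det_one).symm.trans this)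
  ext a c
  simp [eval_genericLocalMatrix v hv, hvf, e, hf.eq_iff, Matrix.one_apply]

end GenericLocalMatrix

theorem exists_injective_mem_of_card_eq {γ : Type*} [Fintype γ] {k r s : ℕ}
    (hks : k ≤ s * r) (C : Finset (γ × Fin (r + 1))) (hC : #C = k + s - 1) :
    ∃ f : Fin k → γ × Fin (r + 1), f.Injective ∧ (∀ c, f c ∈ C) ∧
      ∀ j, ∃ t, (j, t) ∉ Set.range f := by
  classical
  let T : Finset γ := {j | ∀ t, (j, t) ∈ C}
  have hTC : #T * (r + 1) ≤ #C := by
    have := card_le_card (s := T ×ˢ univ) fun β hβ => by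
      simpa using (mem_filter.1 (mem_product.1 hβ).1).2 β.2
    rwa [card_product, card_univ, Fintype.card_fin] at this
  -- `T` holds fewer than `s` full groups, since `s` of them would already have `s * (r + 1) > #C`
  -- elements; deleting one element of each full group leaves at least `k` elements.
  have hT : k + #T ≤ #C := by
    rcases Nat.lt_or_ge #T s with h | h
    · omega
    · nlinarith
  let D := C \ T.image (·, Fin.last r)
  have hD : k ≤ #D := by
    have := le_card_sdiff (T.image (·, Fin.last r)) C
    have := card_image_le (s := T) (f := (·, Fin.last r))
    simp only [D]
    omega
  let f : Fin k → γ × Fin (r + 1) := fun c => D.equivFin.symm (Fin.castLE hD c)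
  have hfD : ∀ c, f c ∈ D := fun c => (D.equivFin.symm _).2
  refine ⟨f, fun c c' h => Fin.castLE_injective hD (D.equivFin.symm.injective (Subtype.ext h)),
    fun c => (mem_sdiff.1 (hfD c)).1, fun j => ?_⟩
  by_cases hj : j ∈ T
  · exact ⟨Fin.last r, fun ⟨c, hc⟩ => (mem_sdiff.1 (hfD c)).2 (mem_image.2 ⟨j, hj, hc.symm⟩)⟩
  · obtain ⟨t, ht⟩ : ∃ t, (j, t) ∉ C := by simpa [T] using hj
    exact ⟨t, fun ⟨c, hc⟩ => ht (hc ▸ (mem_sdiff.1 (hfD c)).1)⟩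

theorem exists_matrix_sum_group_eq_zero_and_det_submatrix_ne_zero {F γ : Type*} [Field F]
    [Fintype F] [Fintype γ] {k r s : ℕ} (hks : k ≤ s * r)
    (hq : (Fintype.card γ * (r + 1)).choose (k + s - 1) < Fintype.card F) :
    ∃ G : Matrix (Fin k) (γ × Fin (r + 1)) F, (∀ a j, ∑ t, G a (j, t) = 0) ∧
      ∀ C : Finset (γ × Fin (r + 1)), #C = k + s - 1 →
        ∃ f : Fin k → γ × Fin (r + 1), (∀ c, f c ∈ C) ∧ (G.submatrix id f).det ≠ 0 := by
  choose f hf_inj hf_mem hf_miss using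
    fun C : {C : Finset (γ × Fin (r + 1)) // #C = k + s - 1} =>
      exists_injective_mem_of_card_eq hks C.1 C.2
  let M := genericLocalMatrix F k r γ
  let P := ∏ C, (M.submatrix id (f C)).det
  have hP : P ≠ 0 := prod_ne_zero_iff.2 fun C _ =>
    det_genericLocalMatrix_submatrix_ne_zero (hf_inj C) (hf_miss C)
  have hdeg : ∀ i, P.degreeOf i < Fintype.card F := fun i => calc
    P.degreeOf i ≤ ∑ C, (M.submatrix id (f C)).det.degreeOf i := degreeOf_prod_le i _ _
    _ ≤ ∑ _C, 1 := sum_le_sum fun C _ => degreeOf_det_genericLocalMatrix_submatrix_le (f C) i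
    _ < Fintype.card F := by simpa [Fintype.card_finset_len] using hq
  obtain ⟨y, hy⟩ := exists_eval_ne_zero_of_degreeOf_lt_card hP hdeg
  have hfactor : ∀ C, eval y (M.submatrix id (f C)).det ≠ 0 := fun C =>
    prod_ne_zero_iff.1 (by simpa only [P, map_prod] using hy) C (mem_univ _)
  refine ⟨M.map (eval y), fun a j => ?_, fun C hC => ⟨f ⟨C, hC⟩, hf_mem _, ?_⟩⟩
  · simp only [Matrix.map_apply, ← map_sum, M, sum_genericLocalMatrix, map_zero]
  · rw [Matrix.submatrix_map, ← RingHom.mapMatrix_apply, ← RingHom.map_det]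
    exact hfactor _

theorem stmt_13_general (n k r d : ℕ) (hk : 0 < k) (hr : 0 < r) (hdvd : (r + 1) ∣ n)
    (hd : (d : ℤ) = (n : ℤ) - ⌈(k : ℚ) / (r : ℚ)⌉ - (k : ℤ) + 2)
    (F : Type*) [Field F] [Fintype F]
    (hq : n.choose (k + (k + r - 1) / r - 1) < Fintype.card F) :
    ∃ (G : Matrix (Fin k) (Fin n) F) (grp : Fin n → Fin (n / (r + 1))),
      (∀ j, (Finset.univ.filter fun i => grp i = j).card = r + 1) ∧
      (∀ i : Fin n, (fun a => G a i) ∈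
        Submodule.span F ((fun j : Fin n => fun a => G a j) ''
          {j : Fin n | grp j = grp i ∧ j ≠ i})) ∧
      (∀ A : Finset (Fin n), A.card = n - d + 1 →
        ∀ x y : Fin k → F,
          (∀ j ∈ A, Matrix.vecMul x G j = Matrix.vecMul y G j) → x = y) := by
  have hks : k ≤ (k + r - 1) / r * r := mul_comm r _ ▸ (ceilDiv_le_iff_le_mul hr).1 le_rfl
  have hs : 1 ≤ (k + r - 1) / r := (Nat.one_le_div_iff hr).2 (by omega)
  have hm : n - d + 1 = k + (k + r - 1) / r - 1 := by
    rw [Rat.ceil_natCast_div_natCast_eq_add_pred_div hr] at hd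
    omega
  have hn : n / (r + 1) * (r + 1) = n := Nat.div_mul_cancel hdvd
  let e : Fin n ≃ Fin (n / (r + 1)) × Fin (r + 1) := (finProdFinEquiv.trans (finCongr hn)).symm
  obtain ⟨G, hG_sum, hG_det⟩ := exists_matrix_sum_group_eq_zero_and_det_submatrix_ne_zero
    (F := F) (γ := Fin (n / (r + 1))) hks (by rwa [Fintype.card_fin, hn])
  refine ⟨G.submatrix id e, fun i => (e i).1, fun j => ?_, fun i => ?_, fun A hA x y hxy => ?_⟩
  · simpa using e.sum_filter_fst_eq (fun _ => (1 : ℕ)) j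
  · refine Submodule.mem_span_image_of_sum_filter_eq_zero ?_ rfl
    ext a
    simpa [Finset.sum_apply] using (e.sum_filter_fst_eq (G a) (e i).1).trans (hG_sum a _)
  · obtain ⟨f, hfA, hf⟩ := hG_det (A.map e.toEmbedding) (by simp [hA, hm])
    refine Matrix.eq_of_vecMul_eq_of_det_submatrix_ne_zero (f := e.symm ∘ f)
      (by simpa [Function.comp_def] using hf) fun c => hxy _ ?_
    simpa using hfA c

/-- There exists a linear code over `F_q` with locality `r`,
length `n` with `(r+1) ∣ n`, and distance `d = n - ⌈k/r⌉ - k + 2`, provided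
`q > C(n, k + ⌈k/r⌉ - 1)`.  (Here `(k+r-1)/r = ⌈k/r⌉` in ℕ.)  The code is given
by a generator matrix `G`; locality is witnessed by a partition of the `n`
coordinates into groups of size `r+1` with each column in the span of the other
`r` columns of its group; distance `d` means any `n-d+1` coordinates of the
codeword determine the message. -/
theorem stmt_13 (n k r d : ℕ) (hk : 0 < k) (hr : 0 < r) (hdvd : (r + 1) ∣ n)
    (hd : (d : ℤ) = (n : ℤ) - ⌈(k : ℚ) / (r : ℚ)⌉ - (k : ℤ) + 2) (hd1 : 1 ≤ d)
    (F : Type*) [Field F] [Fintype F]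
    (hq : n.choose (k + (k + r - 1) / r - 1) < Fintype.card F) :
    ∃ (G : Matrix (Fin k) (Fin n) F) (grp : Fin n → Fin (n / (r + 1))),
      (∀ j, (Finset.univ.filter fun i => grp i = j).card = r + 1) ∧
      (∀ i : Fin n, (fun a => G a i) ∈
        Submodule.span F ((fun j : Fin n => fun a => G a j) ''
          {j : Fin n | grp j = grp i ∧ j ≠ i})) ∧
      (∀ A : Finset (Fin n), A.card = n - d + 1 →
        ∀ x y : Fin k → F,
          (∀ j ∈ A, Matrix.vecMul x G j = Matrix.vecMul y G j) → x = y) :=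
  stmt_13_general n k r d hk hr hdvd hd F hq
end

section
/- The (10,6,5)-LRC obtained by appending two local XOR parities to a (14,10) MDS code has minimum distance exactly 5. -/
/-- The 16 columns of the (10,6,5)-LRC generator matrix
`G_LRC = [G | Σ_{i=1}^{5} g_i, Σ_{i=6}^{10} g_i]`. -/
def lrcCols {F : Type*} [Field F] (G : Matrix (Fin 10) (Fin 14) F) :
    Fin 16 → Fin 10 → F := fun j =>
  if h : (j : ℕ) < 14 then fun a => G a ⟨(j : ℕ), h⟩
  else if (j : ℕ) = 14 then
    ∑ i ∈ Finset.univ.filter (fun i : Fin 14 => (i : ℕ) < 5), fun a => G a i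
  else
    ∑ i ∈ Finset.univ.filter (fun i : Fin 14 => 5 ≤ (i : ℕ) ∧ (i : ℕ) < 10),
      fun a => G a i

/-!
Erasing at most four of the sixteen columns leaves at least ten of the fourteen MDS columns, and any
ten of those are a basis of `F¹⁰`, so the message is determined. Conversely, nine vectors in `F¹⁰`
have a common nonzero orthogonal vector `x`; take it orthogonal to `g₆, …, g₁₄`. Since the columns
of `G` sum to zero, `g₁ + ⋯ + g₅ = -(g₆ + ⋯ + g₁₄)`, so `x` is orthogonal to both local parities as
well, and the messages `x` and `0` agree outside the first five positions.
-/

open Finset Matrix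

theorem eq_of_forall_dotProduct_eq_of_linearIndependent {K n ι : Type*} [Field K] [Fintype n]
    [Fintype ι] {v : ι → n → K} (hli : LinearIndependent K v)
    (hcard : Fintype.card ι = Fintype.card n) {x y : n → K}
    (h : ∀ i, x ⬝ᵥ v i = y ⬝ᵥ v i) : x = y := by
  have hspan : Submodule.span K (Set.range v) = ⊤ :=
    hli.span_eq_top_of_card_eq_finrank' (by rw [hcard, Module.finrank_fintype_fun_eq_card])
  have := LinearMap.ext_on_range hspan (f := dotProductBilin K K x) (g := dotProductBilin K K y) h
  exact dotProduct_eq x y (LinearMap.congr_fun this)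

theorem exists_ne_zero_forall_dotProduct_eq_zero {K n ι : Type*} [Field K] [Fintype n]
    [Fintype ι] (v : ι → n → K) (hcard : Fintype.card ι < Fintype.card n) :
    ∃ x ≠ 0, ∀ i, x ⬝ᵥ v i = 0 := by
  have hker : LinearMap.ker (vecMulLinear (Matrix.of fun a i => v i a)) ≠ ⊥ :=
    LinearMap.ker_ne_bot_of_finrank_lt (by simpa using hcard)
  obtain ⟨x, hx, hx0⟩ := (Submodule.ne_bot_iff _).mp hker
  exact ⟨x, hx0, fun i => congr_fun hx i⟩

theorem eq_of_forall_mem_dotProduct_eq_of_mds {K ι : Type*} [Field K] {k : ℕ}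
    (G : Matrix (Fin k) ι K)
    (hMDS : ∀ s : Finset ι, s.card = k → LinearIndependent K (fun j : ↥s => fun a => G a j))
    {S : Finset ι} (hS : k ≤ S.card) {x y : Fin k → K}
    (h : ∀ j ∈ S, x ⬝ᵥ (fun a => G a j) = y ⬝ᵥ (fun a => G a j)) : x = y := by
  obtain ⟨s, hsS, hs⟩ := exists_subset_card_eq hS
  exact eq_of_forall_dotProduct_eq_of_linearIndependent (hMDS s hs)
    (by rw [Fintype.card_coe, hs, Fintype.card_fin]) fun j => h j (hsS j.2)

theorem le_card_compl_preimage_castLE {m n : ℕ} (hmn : m ≤ n) (E : Finset (Fin n)) :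
    m - E.card ≤ (E.preimage (Fin.castLE hmn) (Fin.castLE_injective hmn).injOn)ᶜ.card := by
  rw [card_compl, card_preimage, Fintype.card_fin]
  have := card_filter_le E (· ∈ Set.range (Fin.castLE hmn))
  omega

section lrcCols

variable {F : Type*} [Field F] (G : Matrix (Fin 10) (Fin 14) F)

theorem lrcCols_of_lt {j : Fin 16} (hj : (j : ℕ) < 14) :
    lrcCols G j = fun a => G a ⟨j, hj⟩ := dif_pos hj

theorem lrcCols_fourteen :
    lrcCols G 14 = ∑ i ∈ univ.filter (fun i : Fin 14 => (i : ℕ) < 5), fun a => G a i := rfl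

theorem lrcCols_fifteen :
    lrcCols G 15 =
      ∑ i ∈ univ.filter (fun i : Fin 14 => 5 ≤ (i : ℕ) ∧ (i : ℕ) < 10), fun a => G a i := rfl

theorem dotProduct_lrcCols_eq_zero (hsum : ∑ j : Fin 14, (fun a => G a j) = (0 : Fin 10 → F))
    {x : Fin 10 → F} (hx : ∀ i : Fin 14, 5 ≤ (i : ℕ) → x ⬝ᵥ (fun a => G a i) = 0)
    {j : Fin 16} (hj : 5 ≤ (j : ℕ)) : x ⬝ᵥ lrcCols G j = 0 := by
  obtain hj14 | rfl | rfl : (j : ℕ) < 14 ∨ j = 14 ∨ j = 15 := by omega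
  · rw [lrcCols_of_lt G hj14]
    exact hx _ hj
  · have hall : ∑ i : Fin 14, x ⬝ᵥ (fun a => G a i) = 0 := by
      rw [← dotProduct_sum, hsum, dotProduct_zero]
    have hhigh : ∑ i ∈ univ.filter (fun i : Fin 14 => ¬ (i : ℕ) < 5),
        x ⬝ᵥ (fun a => G a i) = 0 :=
      sum_eq_zero fun i hi => hx i (not_lt.mp (mem_filter.mp hi).2)
    rw [lrcCols_fourteen, dotProduct_sum]
    rwa [← sum_filter_add_sum_filter_not _ (fun i : Fin 14 => (i : ℕ) < 5), hhigh,
      add_zero] at hall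
  · rw [lrcCols_fifteen, dotProduct_sum]
    exact sum_eq_zero fun i hi => hx i (mem_filter.mp hi).2.1

end lrcCols

theorem stmt_15_general (F : Type*) [Field F]
    (G : Matrix (Fin 10) (Fin 14) F)
    (hMDS : ∀ s : Finset (Fin 14), s.card = 10 →
      LinearIndependent F (fun j : ↥s => fun a => G a (j : Fin 14)))
    (hsum : ∑ j : Fin 14, (fun a => G a j) = (0 : Fin 10 → F)) :
    (∀ E : Finset (Fin 16), E.card ≤ 4 →
      ∀ x y : Fin 10 → F,
        (∀ j ∉ E, ∑ a, x a * lrcCols G j a = ∑ a, y a * lrcCols G j a) → x = y) ∧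
    (∃ E : Finset (Fin 16), E.card = 5 ∧
      ∃ x y : Fin 10 → F, x ≠ y ∧
        ∀ j ∉ E, ∑ a, x a * lrcCols G j a = ∑ a, y a * lrcCols G j a) := by
  constructor
  · intro E hE x y h
    have hcard := le_card_compl_preimage_castLE (show 14 ≤ 16 by norm_num) E
    refine eq_of_forall_mem_dotProduct_eq_of_mds G hMDS (le_trans (by omega) hcard)
      fun j hj => ?_
    have := h (Fin.castLE _ j) (by simpa using hj)
    rwa [lrcCols_of_lt G j.isLt] at this
  · obtain ⟨x, hx0, hx⟩ := exists_ne_zero_forall_dotProduct_eq_zero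
      (fun i : {i : Fin 14 // 5 ≤ (i : ℕ)} => fun a => G a i) (by decide)
    refine ⟨univ.filter (fun j : Fin 16 => (j : ℕ) < 5), by decide, x, 0, hx0, fun j hj => ?_⟩
    have hj5 : 5 ≤ (j : ℕ) := by simpa using hj
    simp only [Pi.zero_apply, zero_mul, sum_const_zero]
    exact dotProduct_lrcCols_eq_zero G hsum (fun i hi => hx ⟨i, hi⟩) hj5

/-- The (10,6,5)-LRC obtained by appending the two local XOR
parities to a (14,10) MDS code (whose 14 columns sum to zero) has minimum
distance exactly 5: any 4 column erasures still allow recovery of the message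
from the surviving codeword coordinates, while some 5 erasures do not. -/
theorem stmt_15 (F : Type*) [Field F] [CharP F 2]
    (G : Matrix (Fin 10) (Fin 14) F)
    (hMDS : ∀ s : Finset (Fin 14), s.card = 10 →
      LinearIndependent F (fun j : ↥s => fun a => G a (j : Fin 14)))
    (hsum : ∑ j : Fin 14, (fun a => G a j) = (0 : Fin 10 → F)) :
    (∀ E : Finset (Fin 16), E.card ≤ 4 →
      ∀ x y : Fin 10 → F,
        (∀ j ∉ E, ∑ a, x a * lrcCols G j a = ∑ a, y a * lrcCols G j a) → x = y) ∧
    (∃ E : Finset (Fin 16), E.card = 5 ∧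
      ∃ x y : Fin 10 → F, x ≠ y ∧
        ∀ j ∉ E, ∑ a, x a * lrcCols G j a = ∑ a, y a * lrcCols G j a) :=
  stmt_15_general F G hMDS hsum
end

section
/- Any subset of ⌈k/r⌉ + k - 2 coded blocks of a code with locality r has joint entropy strictly less than M, when the blocks can be organized so that entropy is accumulated in repair groups of size r+1 contributing at most r·M/k each; consequently the distance bound d ≤ n - ⌈k/r⌉ - k + 2 is met with equality by the greedy construction. -/
/-!
Greedy construction. If `j ∉ R` is determined by `R` (`H (insert j R) = H R`), submodularity
keeps it determined by every superset of `R`, so adjoining the repair group of a fresh block to a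
set `S` adds at most `#R ≤ r` blocks' worth of entropy while adding `r + 1` blocks (after padding).
Taking `⌈k/r⌉ - 1` such groups and then `k - 1 - r (⌈k/r⌉ - 1)` single blocks gives
`k + ⌈k/r⌉ - 2` blocks of entropy at most `(k - 1) M / k < M`.
-/

open Finset

namespace SetFunction

variable {α : Type*} [DecidableEq α] {H : Finset α → ℝ}

theorem union_le_add (hH0 : H ∅ = 0) (hmono : Monotone H)
    (hsub : ∀ S T : Finset α, H (S ∪ T) + H (S ∩ T) ≤ H S + H T) (S T : Finset α) :
    H (S ∪ T) ≤ H S + H T := by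
  have hinter : 0 ≤ H (S ∩ T) := hH0 ▸ hmono (empty_subset _)
  linarith [hsub S T]

theorem le_card_mul {q : ℝ} (hH0 : H ∅ = 0)
    (hunion : ∀ S T : Finset α, H (S ∪ T) ≤ H S + H T) (hsingle : ∀ i, H {i} ≤ q)
    (T : Finset α) : H T ≤ #T * q := by
  induction T using Finset.induction_on with
  | empty => simp [hH0]
  | insert i T hi ih =>
    rw [card_insert_of_notMem hi, insert_eq]
    push_cast
    linarith [hunion {i} T, hsingle i]

theorem le_add_card_sdiff_mul {q : ℝ} (hH0 : H ∅ = 0)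
    (hunion : ∀ S T : Finset α, H (S ∪ T) ≤ H S + H T) (hsingle : ∀ i, H {i} ≤ q)
    {S T : Finset α} (hST : S ⊆ T) : H T ≤ H S + #(T \ S) * q := by
  calc H T = H (S ∪ T \ S) := by rw [union_sdiff_of_subset hST]
    _ ≤ H S + H (T \ S) := hunion _ _
    _ ≤ H S + #(T \ S) * q := by gcongr; exact le_card_mul hH0 hunion hsingle _

theorem insert_le_of_subset (hmono : Monotone H)
    (hsub : ∀ S T : Finset α, H (S ∪ T) + H (S ∩ T) ≤ H S + H T)
    {j : α} {R T : Finset α} (hRT : R ⊆ T) (hj : H (insert j R) ≤ H R) :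
    H (insert j T) ≤ H T := by
  have hunion : insert j R ∪ T = insert j T := by
    rw [insert_union, union_eq_right.mpr hRT]
  have hinter : H R ≤ H (insert j R ∩ T) :=
    hmono (subset_inter (subset_insert j R) hRT)
  have := hsub (insert j R) T
  rw [hunion] at this
  linarith

variable [Fintype α]

theorem exists_card_eq_add_le {r : ℕ} {q : ℝ} (hH0 : H ∅ = 0) (hmono : Monotone H)
    (hsub : ∀ S T : Finset α, H (S ∪ T) + H (S ∩ T) ≤ H S + H T)
    (hsingle : ∀ i, H {i} ≤ q)
    (hloc : ∀ i : α, ∃ R : Finset α, i ∉ R ∧ #R ≤ r ∧ H (insert i R) = H R)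
    {S : Finset α} (hS : #S + (r + 1) ≤ Fintype.card α) :
    ∃ T : Finset α, #T = #S + (r + 1) ∧ H T ≤ H S + r * q := by
  have hunion := union_le_add hH0 hmono hsub
  obtain ⟨j, -, hjS⟩ : ∃ j ∈ univ, j ∉ S :=
    exists_mem_notMem_of_card_lt_card (by rw [card_univ]; omega)
  obtain ⟨R, hjR, hR, hjRH⟩ := hloc j
  have hj : j ∉ S ∪ R := by simp [hjS, hjR]
  set U := insert j (S ∪ R)
  have hU : #U = #(S ∪ R) + 1 := card_insert_of_notMem hj
  have hSR : #S ≤ #(S ∪ R) ∧ #(S ∪ R) ≤ #S + r :=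
    ⟨card_le_card subset_union_left, (card_union_le S R).trans (by omega)⟩
  obtain ⟨T, hUT, -, hT⟩ := exists_subsuperset_card_eq (subset_univ U) (n := #S + (r + 1))
    (by omega) (by rw [card_univ]; exact hS)
  refine ⟨T, hT, ?_⟩
  have hcost : #((S ∪ R) \ S) + #(T \ U) = r := by
    rw [card_sdiff_of_subset subset_union_left, card_sdiff_of_subset hUT, hU, hT]
    omega
  calc H T ≤ H U + #(T \ U) * q := le_add_card_sdiff_mul hH0 hunion hsingle hUT
    _ ≤ H (S ∪ R) + #(T \ U) * q := by
        gcongr; exact insert_le_of_subset hmono hsub subset_union_right hjRH.le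
    _ ≤ H S + #((S ∪ R) \ S) * q + #(T \ U) * q := by
        gcongr; exact le_add_card_sdiff_mul hH0 hunion hsingle subset_union_left
    _ = H S + r * q := by rw [add_assoc, ← add_mul, ← Nat.cast_add, hcost]

theorem exists_card_eq_le_mul {r : ℕ} {q : ℝ} (hH0 : H ∅ = 0) (hmono : Monotone H)
    (hsub : ∀ S T : Finset α, H (S ∪ T) + H (S ∩ T) ≤ H S + H T)
    (hsingle : ∀ i, H {i} ≤ q)
    (hloc : ∀ i : α, ∃ R : Finset α, i ∉ R ∧ #R ≤ r ∧ H (insert i R) = H R) (a b : ℕ)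
    (hab : (r + 1) * a + b ≤ Fintype.card α) :
    ∃ S : Finset α, #S = (r + 1) * a + b ∧ H S ≤ ((r * a + b : ℕ) : ℝ) * q := by
  induction a with
  | zero =>
    obtain ⟨S, -, -, hS⟩ := exists_subsuperset_card_eq (empty_subset (univ : Finset α)) (n := b)
      (by simp) (by rw [card_univ]; simpa using hab)
    refine ⟨S, by simpa using hS, ?_⟩
    simpa [hH0, hS] using le_add_card_sdiff_mul hH0 (union_le_add hH0 hmono hsub) hsingle
      (empty_subset S)
  | succ a ih =>
    obtain ⟨S, hS, hSH⟩ := ih (by nlinarith)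
    obtain ⟨T, hT, hTH⟩ := exists_card_eq_add_le hH0 hmono hsub hsingle hloc
      (hS ▸ (by nlinarith : (r + 1) * a + b + (r + 1) ≤ Fintype.card α))
    refine ⟨T, by rw [hT, hS]; ring, ?_⟩
    calc H T ≤ ((r * a + b : ℕ) : ℝ) * q + r * q := by linarith
      _ = ((r * (a + 1) + b : ℕ) : ℝ) * q := by push_cast; ring

end SetFunction

/-- For a code with locality `r` (each of the `n` blocks, of
entropy `M/k` each, lies in a repair group of size at most `r+1`), the greedy
procedure produces a subset `S` of at least `k + ⌈k/r⌉ - 2` coded blocks whose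
joint entropy is strictly less than `M`; consequently the distance bound
`d ≤ n - ⌈k/r⌉ - k + 2` is met with equality.  (Here `(k+r-1)/r = ⌈k/r⌉`.) -/
theorem stmt_19 (n k r : ℕ) (M : ℝ) (hM : 0 < M) (hk : 0 < k) (hr : 0 < r)
    (hn : k + (k + r - 1) / r - 2 ≤ n)
    (H : Finset (Fin n) → ℝ)
    (hH0 : H ∅ = 0)
    (hmono : ∀ S T : Finset (Fin n), S ⊆ T → H S ≤ H T)
    (hsub : ∀ S T : Finset (Fin n), H (S ∪ T) + H (S ∩ T) ≤ H S + H T)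
    (hsingle : ∀ i : Fin n, H {i} = M / k)
    (hloc : ∀ i : Fin n, ∃ R : Finset (Fin n),
      i ∉ R ∧ R.card ≤ r ∧ H (insert i R) = H R) :
    ∃ S : Finset (Fin n), k + (k + r - 1) / r - 2 ≤ S.card ∧ H S < M := by
  obtain ⟨a, ha⟩ : ∃ a, a = (k - 1) / r := ⟨_, rfl⟩
  have hceil : (k + r - 1) / r = a + 1 := by
    rw [ha, show k + r - 1 = k - 1 + r by omega, Nat.add_div_right _ hr]
  have hra : r * a ≤ k - 1 := ha ▸ Nat.mul_div_le (k - 1) r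
  have hsucc : (r + 1) * a = r * a + a := by ring
  obtain ⟨S, hS, hSH⟩ := SetFunction.exists_card_eq_le_mul hH0 hmono hsub
    (fun i => (hsingle i).le) hloc a (k - 1 - r * a) (by rw [Fintype.card_fin]; omega)
  refine ⟨S, by omega, ?_⟩
  have hcost : r * a + (k - 1 - r * a) = k - 1 := by omega
  have hk' : (0 : ℝ) < k := by exact_mod_cast hk
  calc H S ≤ ((k - 1 : ℕ) : ℝ) * (M / k) := hcost ▸ hSH
    _ = M - M / k := by rw [Nat.cast_sub hk]; field_simp; ring
    _ < M := by linarith [div_pos hM hk']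
end
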